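/- If W^T X = Y + ΔY and W Y = X + ΔX, and the total error ξ := W^T ΔX + ΔY satisfies ξ = 0, and Y has full row rank (i.e., Y Y^T is invertible), then W^T W = I, i.e., the columns of W are orthonormal. -/

import Mathlib

/-!
Substituting `W Y = X + ΔX` into `Wᵀ (W Y)` and then `Wᵀ X = Y + ΔY` gives
`Wᵀ W Y = Y + ξ = Y`, so `Wᵀ W` fixes `Y`; since `Y` has a right inverse
`Yᵀ (Y Yᵀ)⁻¹`, this forces `Wᵀ W = 1`.
-/

open Matrix

theorem Matrix.eq_one_of_mul_eq_self_of_isUnit_mul {m n R : Type*} [Fintype m] [DecidableEq m]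
    [Fintype n] [CommRing R] {A : Matrix m m R} {B : Matrix m n R} {C : Matrix n m R}
    (hBC : IsUnit (B * C)) (h : A * B = B) : A = 1 :=
  hBC.mul_right_cancel <| by rw [← Matrix.mul_assoc, h, Matrix.one_mul]

theorem Matrix.transpose_mul_mul_eq_of_totalError_eq_zero {d d' N R : Type*}
    [Fintype d] [Fintype d'] [CommRing R]
    {W : Matrix d d' R} {X ΔX : Matrix d N R} {Y ΔY : Matrix d' N R}
    (h1 : Wᵀ * X = Y + ΔY) (h2 : W * Y = X + ΔX) (hξ : Wᵀ * ΔX + ΔY = 0) :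
    Wᵀ * W * Y = Y := by
  calc Wᵀ * W * Y = Wᵀ * X + Wᵀ * ΔX := by rw [Matrix.mul_assoc, h2, Matrix.mul_add]
    _ = Y + (Wᵀ * ΔX + ΔY) := by rw [h1]; abel
    _ = Y := by rw [hξ, add_zero]

theorem stmt_1 (d d' N : ℕ)
    (W : Matrix (Fin d) (Fin d') ℝ)
    (X ΔX : Matrix (Fin d) (Fin N) ℝ)
    (Y ΔY : Matrix (Fin d') (Fin N) ℝ)
    (h1 : Wᵀ * X = Y + ΔY) (h2 : W * Y = X + ΔX)
    (hξ : Wᵀ * ΔX + ΔY = 0)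
    (hY : IsUnit (Y * Yᵀ)) :
    Wᵀ * W = 1 :=
  eq_one_of_mul_eq_self_of_isUnit_mul hY (transpose_mul_mul_eq_of_totalError_eq_zero h1 h2 hξ)
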